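/- Let n ≥ 1, m ∈ ℝ, r ≥ 0, and let p : ℤⁿ → ℂ be a symbol of order m. Then the conjunction [p(D) is GH-s for every s > r, and p(D) is not GH-s for any s with 0 ≤ s < r] holds if and only if the following three conditions hold: (i) the set {ξ ∈ ℤⁿ : p(ξ) = 0} is finite; (ii) for every ε > 0 there exists K_ε > 0 such that |p(ξ)| ≥ K_ε·|ξ|^(m−(r+ε)) for all ξ ∈ ℤⁿ \ {0} with p(ξ) ≠ 0; (iii) if r > 0, then for every ε > 0 there exists K'_ε > 0 such that 0 < |p(ξ)| ≤ K'_ε·|ξ|^(m−(r−ε)) for infinitely many ξ ∈ ℤⁿ \ {0}. (This characterizes ind_GH(p(D)) = r, where ind_GH(p(D)) is the infimum of all s ≥ 0 for which p(D) is GH-s.) -/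

import Mathlib

open scoped BigOperators

/-- `|ξ| = Σⱼ |ξⱼ|`. -/
noncomputable def l1norm {n : ℕ} (ξ : Fin n → ℤ) : ℝ := ∑ j, |(ξ j : ℝ)|

/-- `‖ξ‖² = Σⱼ ξⱼ²`. -/
noncomputable def l2normSq {n : ℕ} (ξ : Fin n → ℤ) : ℝ := ∑ j, ((ξ j : ℝ)) ^ 2

/-- `u ∈ H^k(𝕋ⁿ)` in terms of its Fourier coefficients. -/
def InSobolev {n : ℕ} (k : ℝ) (u : (Fin n → ℤ) → ℂ) : Prop :=
  Summable fun ξ : Fin n → ℤ => (1 + l2normSq ξ) ^ k * ‖u ξ‖ ^ 2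

/-- Polynomial growth of Fourier coefficients (a distribution on `𝕋ⁿ`). -/
def PolyGrowth {n : ℕ} (u : (Fin n → ℤ) → ℂ) : Prop :=
  ∃ C N : ℝ, 0 < C ∧ 0 < N ∧
    ∀ ξ, ‖u ξ‖ ≤ C * (1 + Real.sqrt (l2normSq ξ)) ^ N

/-- Rapidly decreasing Fourier coefficients (a smooth function on `𝕋ⁿ`). -/
def RapidDecay {n : ℕ} (v : (Fin n → ℤ) → ℂ) : Prop :=
  ∀ N : ℝ, 0 < N → ∃ C : ℝ, 0 < C ∧
    ∀ ξ, ‖v ξ‖ ≤ C * (1 + Real.sqrt (l2normSq ξ)) ^ (-N)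

/-- `p` is a symbol of order `m`. -/
def SymbolOrder {n : ℕ} (m : ℝ) (p : (Fin n → ℤ) → ℂ) : Prop :=
  ∃ C : ℝ, 0 < C ∧ ∀ ξ, ‖p ξ‖ ≤ C * (1 + l2normSq ξ) ^ (m / 2)

/-- `p(D)` is globally hypoelliptic with loss of `r` derivatives (GH-`r`). -/
def GHr {n : ℕ} (m r : ℝ) (p : (Fin n → ℤ) → ℂ) : Prop :=
  ∀ (k : ℝ) (u : (Fin n → ℤ) → ℂ), PolyGrowth u →
    InSobolev k (fun ξ => p ξ * u ξ) → InSobolev (k + m - r) u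

/-- `p(D)` is globally solvable with loss of `r` derivatives (GS-`r`). -/
def GSr {n : ℕ} (m r : ℝ) (p : (Fin n → ℤ) → ℂ) : Prop :=
  ∀ (k : ℝ) (f : (Fin n → ℤ) → ℂ), InSobolev k f → (∀ ξ, p ξ = 0 → f ξ = 0) →
    ∃ u : (Fin n → ℤ) → ℂ, InSobolev (k + m - r) u ∧ ∀ ξ, p ξ * u ξ = f ξ

/-- `p(D)` is globally hypoelliptic (GH). -/
def GloballyHypoelliptic {n : ℕ} (p : (Fin n → ℤ) → ℂ) : Prop :=
  ∀ u : (Fin n → ℤ) → ℂ, PolyGrowth u →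
    RapidDecay (fun ξ => p ξ * u ξ) → RapidDecay u

/-
Write `⟨ξ⟩² = 1 + ‖ξ‖²`. The operator `p(D)` is GH-`s` exactly when `⟨ξ⟩^(m-s) = O(|p(ξ)|)`
along the cofinite filter on `ℤⁿ`. The bound gives the Sobolev estimate coefficient by
coefficient. If it fails, there are distinct `ξⱼ` with `|p(ξⱼ)| < 2⁻ʲ ⟨ξⱼ⟩^(m-s)`, and the `u`
supported on `{ξⱼ}` with `|u(ξⱼ)| = ⟨ξⱼ⟩^(s-m)` has `p·u ∈ L²` but `u ∉ H^(m-s)`.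
Since `⟨ξ⟩² ≤ 2|ξ|² ≤ 2n⟨ξ⟩²` for `ξ ≠ 0`, the same holds with the `ℓ¹` norm `|ξ|`. So the
theorem is about the down-set of exponents `t` with `|ξ|^t = O(|p(ξ)|)`: (i) and (ii) say that
it contains every `t < m - r`, and, given (i), (iii) says that it contains no `t > m - r`.
-/

open Filter Asymptotics Set Topology

section Norms

variable {n : ℕ}

lemma l2normSq_nonneg (ξ : Fin n → ℤ) : 0 ≤ l2normSq ξ :=
  Finset.sum_nonneg fun _ _ => sq_nonneg _

lemma one_add_l2normSq_pos (ξ : Fin n → ℤ) : 0 < 1 + l2normSq ξ := by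
  linarith [l2normSq_nonneg ξ]

lemma l1norm_nonneg (ξ : Fin n → ℤ) : 0 ≤ l1norm ξ :=
  Finset.sum_nonneg fun _ _ => abs_nonneg _

lemma abs_le_l1norm (ξ : Fin n → ℤ) (i : Fin n) : |(ξ i : ℝ)| ≤ l1norm ξ :=
  Finset.single_le_sum (f := fun j => |(ξ j : ℝ)|) (fun _ _ => abs_nonneg _) (Finset.mem_univ i)

lemma one_le_l1norm {ξ : Fin n → ℤ} (hξ : ξ ≠ 0) : 1 ≤ l1norm ξ := by
  obtain ⟨i, hi⟩ := Function.ne_iff.mp hξ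
  calc (1 : ℝ) ≤ |(ξ i : ℝ)| := by exact_mod_cast Int.one_le_abs hi
    _ ≤ l1norm ξ := abs_le_l1norm ξ i

lemma l2normSq_le_l1norm_sq (ξ : Fin n → ℤ) : l2normSq ξ ≤ l1norm ξ ^ 2 := by
  simpa [l2normSq, l1norm, sq_abs] using Finset.sum_sq_le_sq_sum_of_nonneg
    (s := Finset.univ) (f := fun i => |(ξ i : ℝ)|) fun i _ => abs_nonneg _

lemma l1norm_sq_le (ξ : Fin n → ℤ) : l1norm ξ ^ 2 ≤ n * l2normSq ξ := by
  simpa [l2normSq, l1norm, sq_abs] using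
    sq_sum_le_card_mul_sum_sq (s := Finset.univ) (f := fun i => |(ξ i : ℝ)|)

lemma tendsto_l1norm_cofinite_atTop : Tendsto (l1norm (n := n)) cofinite atTop := by
  refine tendsto_atTop_mono (fun ξ => ?_)
    (cocompact_eq_cofinite (Fin n → ℤ) ▸ tendsto_norm_cocompact_atTop)
  refine (pi_norm_le_iff_of_nonneg (l1norm_nonneg ξ)).mpr fun i => ?_
  simpa [Int.norm_eq_abs] using abs_le_l1norm ξ i

lemma isTheta_l1norm_rpow (t : ℝ) :
    (fun ξ : Fin n → ℤ => l1norm ξ ^ t) =Θ[cofinite] fun ξ => (1 + l2normSq ξ) ^ (t / 2) := by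
  have hsq : (fun ξ : Fin n → ℤ => l1norm ξ ^ 2) =Θ[cofinite] fun ξ => 1 + l2normSq ξ := by
    refine ⟨.of_bound n (.of_forall fun ξ => ?_),
      .of_bound 2 ((eventually_cofinite_ne 0).mono fun ξ hξ => ?_)⟩ <;>
    simp only [Real.norm_of_nonneg (sq_nonneg (l1norm ξ)),
      Real.norm_of_nonneg (one_add_l2normSq_pos ξ).le]
    · nlinarith [l1norm_sq_le ξ, n.cast_nonneg (α := ℝ)]
    · nlinarith [l2normSq_le_l1norm_sq ξ, one_le_l1norm hξ]
  have hpow : (fun ξ : Fin n → ℤ => l1norm ξ ^ t) = fun ξ => (l1norm ξ ^ 2) ^ (t / 2) := by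
    ext ξ
    rw [← Real.rpow_natCast, ← Real.rpow_mul (l1norm_nonneg ξ)]
    ring_nf
  rw [hpow]
  exact hsq.rpow (.of_forall fun ξ => sq_nonneg _)
    (.of_forall fun ξ => (one_add_l2normSq_pos ξ).le)

end Norms

theorem exists_injective_forall_mem {α : Type*} [Countable α] {S : ℕ → Set α}
    (hS : ∀ j, (S j).Infinite) : ∃ a : ℕ → α, Function.Injective a ∧ ∀ j, a j ∈ S j := by
  have : Infinite α := infinite_univ_iff.mp ((hS 0).mono (subset_univ _))
  obtain ⟨e⟩ := nonempty_equiv_of_countable (α := ℕ) (β := α)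
  obtain ⟨φ, hφ, hmem⟩ := extraction_forall_of_frequently (P := fun j k => e k ∈ S j) fun j =>
    Nat.frequently_atTop_iff_infinite.mpr
      ((hS j).preimage (e.surjective.range_eq ▸ subset_univ _))
  exact ⟨e ∘ φ, e.injective.comp hφ.injective, hmem⟩

section Hypoellipticity

variable {n : ℕ} {m s : ℝ} {p : (Fin n → ℤ) → ℂ}

lemma polyGrowth_of_norm_le_rpow {u : (Fin n → ℤ) → ℂ} (a : ℝ)
    (hu : ∀ ξ, ‖u ξ‖ ≤ (1 + l2normSq ξ) ^ a) : PolyGrowth u := by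
  refine ⟨1, 2 * |a| + 1, one_pos, by positivity, fun ξ => ?_⟩
  have hl := l2normSq_nonneg ξ
  have hsqrt : 1 + l2normSq ξ ≤ (1 + √(l2normSq ξ)) ^ (2 : ℝ) := by
    rw [Real.rpow_two]
    nlinarith [Real.sq_sqrt hl, Real.sqrt_nonneg (l2normSq ξ)]
  have hone : 1 ≤ 1 + √(l2normSq ξ) := le_add_of_nonneg_right (Real.sqrt_nonneg _)
  calc ‖u ξ‖ ≤ (1 + l2normSq ξ) ^ |a| :=
        (hu ξ).trans (Real.rpow_le_rpow_of_exponent_le (by linarith) (le_abs_self a))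
    _ ≤ ((1 + √(l2normSq ξ)) ^ (2 : ℝ)) ^ |a| := by gcongr
    _ = (1 + √(l2normSq ξ)) ^ (2 * |a|) := by rw [← Real.rpow_mul (by positivity)]
    _ ≤ 1 * (1 + √(l2normSq ξ)) ^ (2 * |a| + 1) := by
        rw [one_mul]
        exact Real.rpow_le_rpow_of_exponent_le hone (by linarith)

lemma rpow_div_two_sq {x : ℝ} (hx : 0 ≤ x) (a : ℝ) : (x ^ (a / 2)) ^ 2 = x ^ a := by
  rw [← Real.rpow_natCast, ← Real.rpow_mul hx]
  ring_nf

theorem GHr_of_isBigO (h : (fun ξ => (1 + l2normSq ξ) ^ ((m - s) / 2)) =O[cofinite] p) :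
    GHr m s p := by
  obtain ⟨c, hc, hbound⟩ := isBigO_iff''.mp h
  intro k u _ hpu
  refine Summable.of_norm_bounded_eventually (hpu.mul_left (c⁻¹ ^ 2)) (hbound.mono fun ξ hξ => ?_)
  have hw := one_add_l2normSq_pos ξ
  set A := (1 + l2normSq ξ) ^ ((m - s) / 2)
  rw [Real.norm_of_nonneg (by positivity)] at hξ
  have hAu : A * ‖u ξ‖ ≤ c⁻¹ * ‖p ξ * u ξ‖ := by
    rw [norm_mul, le_inv_mul_iff₀ hc, ← mul_assoc]
    gcongr
  calc ‖(1 + l2normSq ξ) ^ (k + m - s) * ‖u ξ‖ ^ 2‖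
        = (1 + l2normSq ξ) ^ k * (A * ‖u ξ‖) ^ 2 := by
          rw [Real.norm_of_nonneg (by positivity), mul_pow, rpow_div_two_sq hw.le, add_sub_assoc,
            Real.rpow_add hw, mul_assoc]
    _ ≤ (1 + l2normSq ξ) ^ k * (c⁻¹ * ‖p ξ * u ξ‖) ^ 2 := by gcongr
    _ = c⁻¹ ^ 2 * ((1 + l2normSq ξ) ^ k * ‖p ξ * u ξ‖ ^ 2) := by ring

theorem not_GHr_of_summable {a : ℕ → Fin n → ℤ} (ha : Function.Injective a)
    (hsum : Summable fun j => ‖p (a j)‖ ^ 2 * (1 + l2normSq (a j)) ^ (s - m)) :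
    ¬ GHr m s p := by
  set u : (Fin n → ℤ) → ℂ :=
    (range a).indicator fun ξ => (((1 + l2normSq ξ) ^ ((s - m) / 2) : ℝ) : ℂ)
  have hu : ∀ j, ‖u (a j)‖ = (1 + l2normSq (a j)) ^ ((s - m) / 2) := fun j => by
    simp [u, Real.rpow_nonneg (one_add_l2normSq_pos (a j)).le]
  have hu_le : ∀ ξ, ‖u ξ‖ ≤ (1 + l2normSq ξ) ^ ((s - m) / 2) := fun ξ => by
    rw [norm_indicator_eq_indicator_norm]
    refine (indicator_le_self' (fun _ _ => norm_nonneg _) ξ).trans_eq ?_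
    simp [Real.rpow_nonneg (one_add_l2normSq_pos ξ).le]
  intro hGH
  have hpu : InSobolev 0 fun ξ => p ξ * u ξ := by
    refine (ha.summable_iff fun ξ hξ => by simp [u, hξ]).mp (hsum.congr fun j => ?_)
    simp only [Function.comp_apply, Real.rpow_zero, one_mul, norm_mul, hu, mul_pow,
      rpow_div_two_sq (one_add_l2normSq_pos _).le]
  have hone : Summable fun _ : ℕ => (1 : ℝ) := by
    refine ((hGH 0 u (polyGrowth_of_norm_le_rpow _ hu_le) hpu).comp_injective ha).congr fun j => ?_
    have hw := one_add_l2normSq_pos (a j)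
    simp only [Function.comp_apply, hu, rpow_div_two_sq hw.le, ← Real.rpow_add hw]
    rw [show (0 : ℝ) + m - s + (s - m) = 0 by ring, Real.rpow_zero]
  exact (Finite.of_summable_const one_pos hone).false

theorem isBigO_of_GHr (h : GHr m s p) :
    (fun ξ => (1 + l2normSq ξ) ^ ((m - s) / 2)) =O[cofinite] p := by
  by_contra hO
  rw [isBigO_iff''] at hO
  push Not at hO
  have hS : ∀ j : ℕ,
      {ξ | ‖p ξ‖ < (1 / 2) ^ j * (1 + l2normSq ξ) ^ ((m - s) / 2)}.Infinite := fun j => by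
    refine frequently_cofinite_iff_infinite.mp ((hO ((1 / 2) ^ j) (by positivity)).mono
      fun ξ hξ => ?_)
    rwa [Real.norm_of_nonneg (Real.rpow_nonneg (one_add_l2normSq_pos ξ).le _)] at hξ
  obtain ⟨a, ha, hmem⟩ := exists_injective_forall_mem hS
  refine not_GHr_of_summable ha ((summable_geometric_of_lt_one (r := (1 / 2) ^ 2)
    (by norm_num) (by norm_num)).of_nonneg_of_le
    (fun j => mul_nonneg (sq_nonneg _) (Real.rpow_nonneg (one_add_l2normSq_pos _).le _))
    fun j => ?_) h
  have hw := one_add_l2normSq_pos (a j)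
  calc ‖p (a j)‖ ^ 2 * (1 + l2normSq (a j)) ^ (s - m)
      ≤ ((1 / 2) ^ j * (1 + l2normSq (a j)) ^ ((m - s) / 2)) ^ 2
          * (1 + l2normSq (a j)) ^ (s - m) := by
        gcongr
        exact (hmem j).le
    _ = ((1 / 2) ^ 2) ^ j := by
        rw [mul_pow, rpow_div_two_sq hw.le, mul_assoc, ← Real.rpow_add hw, sub_add_sub_cancel,
          sub_self, Real.rpow_zero, mul_one, ← pow_mul, ← pow_mul, mul_comm]

theorem GHr_iff_isBigO_l1norm :
    GHr m s p ↔ (fun ξ => l1norm ξ ^ (m - s)) =O[cofinite] p := by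
  rw [(isTheta_l1norm_rpow _).isBigO_congr_left]
  exact ⟨isBigO_of_GHr, GHr_of_isBigO⟩

end Hypoellipticity

section LowerBounds

variable {n : ℕ} {p : (Fin n → ℤ) → ℂ} {t t' K : ℝ}

lemma isBigO_l1norm_rpow_of_le (h : (fun ξ => l1norm ξ ^ t) =O[cofinite] p) (ht : t' ≤ t) :
    (fun ξ => l1norm ξ ^ t') =O[cofinite] p := by
  refine (IsBigO.of_bound 1 ((eventually_cofinite_ne 0).mono fun ξ hξ => ?_)).trans h
  have h1 := one_le_l1norm hξ
  rw [one_mul, Real.norm_of_nonneg (by positivity), Real.norm_of_nonneg (by positivity)]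
  exact Real.rpow_le_rpow_of_exponent_le h1 ht

lemma finite_setOf_eq_zero_of_isBigO (h : (fun ξ => l1norm ξ ^ t) =O[cofinite] p) :
    {ξ | p ξ = 0}.Finite := by
  refine (eventually_cofinite.mp (h.eq_zero_imp.and (eventually_cofinite_ne 0))).subset
    fun ξ hp ⟨himp, hξ⟩ => ?_
  exact (Real.rpow_pos_of_pos (zero_lt_one.trans_le (one_le_l1norm hξ)) t).ne' (himp hp)

lemma isBigO_of_forall_le (hfin : {ξ | p ξ = 0}.Finite) (hK : 0 < K)
    (h : ∀ ξ, ξ ≠ 0 → p ξ ≠ 0 → K * l1norm ξ ^ t ≤ ‖p ξ‖) :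
    (fun ξ => l1norm ξ ^ t) =O[cofinite] p := by
  refine isBigO_iff''.mpr ⟨K, hK, ((eventually_cofinite_ne 0).and
    hfin.eventually_cofinite_notMem).mono fun ξ ⟨hξ, hp⟩ => ?_⟩
  rw [Real.norm_of_nonneg (Real.rpow_nonneg (l1norm_nonneg ξ) t)]
  exact h ξ hξ hp

/-- Only finitely many `ξ` violate the asymptotic bound, and at each of them with `p ξ ≠ 0`
every small enough constant works. -/
lemma exists_forall_le_of_isBigO (h : (fun ξ => l1norm ξ ^ t) =O[cofinite] p) :
    ∃ K, 0 < K ∧ ∀ ξ, ξ ≠ 0 → p ξ ≠ 0 → K * l1norm ξ ^ t ≤ ‖p ξ‖ := by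
  obtain ⟨c, hc, hev⟩ := isBigO_iff''.mp h
  simp only [Real.norm_of_nonneg (Real.rpow_nonneg (l1norm_nonneg _) t)] at hev
  have hsmall : ∀ ξ, ∀ᶠ K in 𝓝 (0 : ℝ), p ξ ≠ 0 → K * l1norm ξ ^ t ≤ ‖p ξ‖ := fun ξ => by
    by_cases hp : p ξ = 0
    · simp [hp]
    have hlim : Tendsto (fun K : ℝ => K * l1norm ξ ^ t) (𝓝 0) (𝓝 0) := by
      simpa using (tendsto_id (x := 𝓝 (0 : ℝ))).mul_const (l1norm ξ ^ t)
    exact (hlim.eventually (ge_mem_nhds (norm_pos_iff.mpr hp))).mono fun _ hK _ => hK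
  have hall := (eventually_all_finite (eventually_cofinite.mp hev)).mpr fun ξ _ => hsmall ξ
  obtain ⟨K, hKpos, hKc, hK⟩ := (eventually_mem_nhdsWithin.and
    (nhdsWithin_le_nhds ((eventually_lt_nhds hc).and hall))).exists (f := 𝓝[>] (0 : ℝ))
  refine ⟨K, hKpos, fun ξ hξ hp => ?_⟩
  by_cases hbad : c * l1norm ξ ^ t ≤ ‖p ξ‖
  · exact (mul_le_mul_of_nonneg_right hKc.le (Real.rpow_nonneg (l1norm_nonneg ξ) t)).trans hbad
  · exact hK ξ hbad hp

lemma isBigO_of_finite_setOf_le (hK : 0 < K) (hfin : {ξ | p ξ = 0}.Finite)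
    (hS : {ξ : Fin n → ℤ | ξ ≠ 0 ∧ 0 < ‖p ξ‖ ∧ ‖p ξ‖ ≤ K * l1norm ξ ^ t}.Finite) :
    (fun ξ => l1norm ξ ^ t) =O[cofinite] p := by
  refine isBigO_iff''.mpr ⟨K, hK, ((eventually_cofinite_ne 0).and
    (hfin.eventually_cofinite_notMem.and hS.eventually_cofinite_notMem)).mono
    fun ξ ⟨hξ, hp, hξS⟩ => ?_⟩
  rw [Real.norm_of_nonneg (Real.rpow_nonneg (l1norm_nonneg ξ) t)]
  by_contra hlt
  exact hξS ⟨hξ, norm_pos_iff.mpr hp, (not_le.mp hlt).le⟩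

lemma not_isBigO_of_infinite_setOf_le (htt : t' < t)
    (hS : {ξ : Fin n → ℤ | ξ ≠ 0 ∧ 0 < ‖p ξ‖ ∧ ‖p ξ‖ ≤ K * l1norm ξ ^ t'}.Infinite) :
    ¬ (fun ξ => l1norm ξ ^ t) =O[cofinite] p := by
  intro h
  obtain ⟨c, hc, hev⟩ := isBigO_iff''.mp h
  have hbig : ∀ᶠ ξ : Fin n → ℤ in cofinite, K < c * l1norm ξ ^ (t - t') :=
    (((tendsto_rpow_atTop (sub_pos.mpr htt)).comp tendsto_l1norm_cofinite_atTop).const_mul_atTop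
      hc).eventually_gt_atTop K
  obtain ⟨ξ, ⟨hξ, -, hle⟩, hlow, hgt⟩ :=
    ((frequently_cofinite_iff_infinite.mpr hS).and_eventually (hev.and hbig)).exists
  have hl : 0 < l1norm ξ := zero_lt_one.trans_le (one_le_l1norm hξ)
  have hsplit : l1norm ξ ^ t = l1norm ξ ^ (t - t') * l1norm ξ ^ t' := by
    rw [← Real.rpow_add hl, sub_add_cancel]
  rw [Real.norm_of_nonneg (Real.rpow_nonneg hl.le t), hsplit] at hlow
  nlinarith [Real.rpow_pos_of_pos hl t']

end LowerBounds

theorem stmt_2_general {n : ℕ} (m r : ℝ)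
    (p : (Fin n → ℤ) → ℂ) :
    ((∀ s : ℝ, r < s → GHr m s p) ∧ (∀ s : ℝ, 0 ≤ s → s < r → ¬ GHr m s p)) ↔
      ({ξ : Fin n → ℤ | p ξ = 0}.Finite ∧
        (∀ ε : ℝ, 0 < ε → ∃ K : ℝ, 0 < K ∧ ∀ ξ : Fin n → ℤ, ξ ≠ 0 → p ξ ≠ 0 →
          K * l1norm ξ ^ (m - (r + ε)) ≤ ‖p ξ‖) ∧
        (0 < r → ∀ ε : ℝ, 0 < ε → ∃ K' : ℝ, 0 < K' ∧
          {ξ : Fin n → ℤ | ξ ≠ 0 ∧ 0 < ‖p ξ‖ ∧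
            ‖p ξ‖ ≤ K' * l1norm ξ ^ (m - (r - ε))}.Infinite)) := by
  simp only [GHr_iff_isBigO_l1norm]
  constructor
  · rintro ⟨hGH, hnotGH⟩
    have hfin := finite_setOf_eq_zero_of_isBigO (hGH (r + 1) (by linarith))
    refine ⟨hfin, fun ε hε => exists_forall_le_of_isBigO (hGH (r + ε) (by linarith)),
      fun hr ε hε => ?_⟩
    by_contra! hS
    refine hnotGH (max 0 (r - ε)) (le_max_left _ _) (max_lt hr (by linarith)) ?_
    exact isBigO_l1norm_rpow_of_le (isBigO_of_finite_setOf_le one_pos hfin (hS 1 one_pos))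
      (by linarith [le_max_right 0 (r - ε)])
  · rintro ⟨hfin, hlower, hupper⟩
    refine ⟨fun s hs => ?_, fun s hs hsr => ?_⟩
    · obtain ⟨K, hK, hbound⟩ := hlower (s - r) (by linarith)
      rw [add_sub_cancel] at hbound
      exact isBigO_of_forall_le hfin hK hbound
    · obtain ⟨K', -, hS⟩ := hupper (by linarith) ((r - s) / 2) (by linarith)
      exact not_isBigO_of_infinite_setOf_le (by linarith) hS

theorem stmt_2 {n : ℕ} (hn : 1 ≤ n) (m r : ℝ) (hr : 0 ≤ r)
    (p : (Fin n → ℤ) → ℂ) (hp : SymbolOrder m p) :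
    ((∀ s : ℝ, r < s → GHr m s p) ∧ (∀ s : ℝ, 0 ≤ s → s < r → ¬ GHr m s p)) ↔
      ({ξ : Fin n → ℤ | p ξ = 0}.Finite ∧
        (∀ ε : ℝ, 0 < ε → ∃ K : ℝ, 0 < K ∧ ∀ ξ : Fin n → ℤ, ξ ≠ 0 → p ξ ≠ 0 →
          K * l1norm ξ ^ (m - (r + ε)) ≤ ‖p ξ‖) ∧
        (0 < r → ∀ ε : ℝ, 0 < ε → ∃ K' : ℝ, 0 < K' ∧
          {ξ : Fin n → ℤ | ξ ≠ 0 ∧ 0 < ‖p ξ‖ ∧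
            ‖p ξ‖ ≤ K' * l1norm ξ ^ (m - (r - ε))}.Infinite)) :=
  stmt_2_general m r p
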